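/- Let d, k be positive integers, β > 0, and S defined by T^k S(T) = ∫_0^T ((d+k+1)t+k) t^{k-1}(t+β)^d dt. Then S(T) is divisible by (T+β)^d (as a polynomial) if and only if β = 1, in which case S(T) = (T+β)^{d+1}. -/

import Mathlib

/-!
Differentiating `T ^ k * (T + β) ^ (d + 1)` gives `((d + k + 1) T + k β) T ^ (k - 1) (T + β) ^ d`, so
`S = (X + β) ^ (d + 1) + k (1 - β) Q`, where `T ^ k Q(T) = ∫₀ᵀ t ^ (k - 1) (t + β) ^ d dt`.
The integrand has constant sign on `(-β, 0)`, hence `Q(-β) ≠ 0`; so `(X + β) ^ d ∣ S` forces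
`k (1 - β) = 0`, i.e. `β = 1`.
-/

open Polynomial intervalIntegral

noncomputable def momentPoly (k : ℕ) (p : ℝ[X]) : ℝ[X] :=
  ∑ j ∈ Finset.range (p.natDegree + 1), C (p.coeff j / (k + j)) * X ^ j

theorem pow_mul_eval_momentPoly (k : ℕ) (p : ℝ[X]) (t : ℝ) :
    t ^ k * (momentPoly k p).eval t =
      ∑ j ∈ Finset.range (p.natDegree + 1), p.coeff j / (k + j) * t ^ (k + j) := by
  simp only [momentPoly, eval_finsetSum, eval_mul, eval_C, eval_pow, eval_X, Finset.mul_sum]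
  refine Finset.sum_congr rfl fun j _ => ?_
  ring

theorem hasDerivAt_pow_mul_eval_momentPoly {k : ℕ} (hk : 0 < k) (p : ℝ[X]) (t : ℝ) :
    HasDerivAt (fun t => t ^ k * (momentPoly k p).eval t) (t ^ (k - 1) * p.eval t) t := by
  simp only [pow_mul_eval_momentPoly]
  rw [eval_eq_sum_range, Finset.mul_sum]
  refine HasDerivAt.fun_sum fun j _ => ?_
  refine ((hasDerivAt_pow (k + j) t).const_mul _).congr_deriv ?_
  have hkj : (k : ℝ) + j ≠ 0 := by positivity
  rw [show k + j - 1 = (k - 1) + j by omega, pow_add]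
  push_cast
  field_simp

theorem integral_pow_mul_eval {k : ℕ} (hk : 0 < k) (p : ℝ[X]) (T : ℝ) :
    ∫ t in (0 : ℝ)..T, t ^ (k - 1) * p.eval t = T ^ k * (momentPoly k p).eval T := by
  rw [integral_eq_sub_of_hasDerivAt (fun t _ => hasDerivAt_pow_mul_eval_momentPoly hk p t)
    (Continuous.intervalIntegrable (by fun_prop) _ _)]
  simp [zero_pow hk.ne']

theorem eq_of_pow_mul_eval_eq {k : ℕ} {p q : ℝ[X]}
    (h : ∀ T : ℝ, T ^ k * p.eval T = T ^ k * q.eval T) : p = q := by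
  refine mul_left_cancel₀ (pow_ne_zero k X_ne_zero) (Polynomial.funext fun T => ?_)
  simpa using h T

theorem hasDerivAt_pow_mul_add_pow {k : ℕ} (hk : 0 < k) (d : ℕ) (β t : ℝ) :
    HasDerivAt (fun t => t ^ k * (t + β) ^ (d + 1))
      (((d + k + 1) * t + k * β) * t ^ (k - 1) * (t + β) ^ d) t := by
  refine ((hasDerivAt_pow k t).mul (((hasDerivAt_id t).add_const β).pow (d + 1))).congr_deriv ?_
  obtain ⟨k, rfl⟩ := Nat.exists_eq_add_one_of_ne_zero hk.ne'
  simp only [id_eq, Pi.pow_apply, Nat.add_sub_cancel]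
  push_cast
  ring

theorem integral_eq_pow_mul_add_pow_add {k : ℕ} (hk : 0 < k) (d : ℕ) (β T : ℝ) :
    ∫ t in (0 : ℝ)..T, ((d + k + 1) * t + k) * t ^ (k - 1) * (t + β) ^ d =
      T ^ k * (T + β) ^ (d + 1) + k * (1 - β) * ∫ t in (0 : ℝ)..T, t ^ (k - 1) * (t + β) ^ d := by
  have hsplit : (fun t : ℝ => ((d + k + 1) * t + k) * t ^ (k - 1) * (t + β) ^ d) = fun t =>
      ((d + k + 1) * t + k * β) * t ^ (k - 1) * (t + β) ^ d +
        k * (1 - β) * (t ^ (k - 1) * (t + β) ^ d) := by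
    funext t
    ring
  rw [hsplit, integral_add (Continuous.intervalIntegrable (by fun_prop) _ _)
    (Continuous.intervalIntegrable (by fun_prop) _ _), integral_const_mul,
    integral_eq_sub_of_hasDerivAt (fun t _ => hasDerivAt_pow_mul_add_pow hk d β t)
      (Continuous.intervalIntegrable (by fun_prop) _ _)]
  simp [zero_pow hk.ne']

theorem integral_neg_pow_mul_add_pow_ne_zero (k d : ℕ) {β : ℝ} (hβ : 0 < β) :
    ∫ t in (-β)..0, t ^ k * (t + β) ^ d ≠ 0 := by
  have hpos : 0 < ∫ t in (-β)..0, (-t) ^ k * (t + β) ^ d :=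
    intervalIntegral_pos_of_pos_on (Continuous.intervalIntegrable (by fun_prop) _ _)
      (fun t ht => mul_pos (pow_pos (by linarith [ht.2]) k) (pow_pos (by linarith [ht.1]) d))
      (by linarith)
  have hsign : (fun t : ℝ => t ^ k * (t + β) ^ d) =
      fun t => (-1) ^ k * ((-t) ^ k * (t + β) ^ d) := by
    funext t
    rw [← mul_assoc, ← mul_pow, neg_one_mul, neg_neg]
  rw [hsign, integral_const_mul]
  exact mul_ne_zero (pow_ne_zero k (by norm_num)) hpos.ne'

theorem eval_momentPoly_neg_ne_zero {k : ℕ} (hk : 0 < k) (d : ℕ) {β : ℝ} (hβ : 0 < β) :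
    (momentPoly k ((X + C β) ^ d)).eval (-β) ≠ 0 := by
  intro h
  have hint := integral_pow_mul_eval hk ((X + C β) ^ d) (-β)
  rw [h, mul_zero, integral_symm, neg_eq_zero] at hint
  exact integral_neg_pow_mul_add_pow_ne_zero (k - 1) d hβ (by simpa using hint)

theorem pow_dvd_pow_succ_add_C_mul_iff {R : Type*} [CommRing R] [IsDomain R] {d : ℕ}
    (hd : 0 < d) {a c : R} {q : R[X]} (hq : q.eval (-a) ≠ 0) :
    (X + C a) ^ d ∣ (X + C a) ^ (d + 1) + C c * q ↔ c = 0 := by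
  rw [dvd_add_right (pow_dvd_pow _ d.le_succ)]
  refine ⟨fun h => ?_, fun hc => by simp [hc]⟩
  have hroot : (X - C (-a)) ∣ C c * q := by
    simpa using (dvd_pow_self _ hd.ne').trans h
  rw [dvd_iff_isRoot, IsRoot, eval_mul, eval_C] at hroot
  exact (mul_eq_zero.mp hroot).resolve_right hq

theorem stmt_13 (d k : ℕ) (hd : 0 < d) (hk : 0 < k) (β : ℝ) (hβ : 0 < β)
    (S : Polynomial ℝ)
    (hS : ∀ T : ℝ, T ^ k * S.eval T
      = ∫ t in (0:ℝ)..T, ((d + k + 1) * t + k) * t ^ (k - 1) * (t + β) ^ d) :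
    (((Polynomial.X + Polynomial.C β) ^ d ∣ S) ↔ β = 1) ∧
    (β = 1 → ∀ T : ℝ, S.eval T = (T + β) ^ (d + 1)) := by
  set Q := momentPoly k ((X + C β) ^ d)
  have hSQ : S = (X + C β) ^ (d + 1) + C (k * (1 - β)) * Q := by
    refine eq_of_pow_mul_eval_eq (k := k) fun T => ?_
    have hint := integral_pow_mul_eval hk ((X + C β) ^ d) T
    simp only [eval_pow, eval_add, eval_X, eval_C] at hint
    rw [hS, integral_eq_pow_mul_add_pow_add hk, hint]
    simp only [eval_add, eval_mul, eval_pow, eval_X, eval_C]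
    ring
  have hcoef : (k : ℝ) * (1 - β) = 0 ↔ β = 1 := by
    rw [mul_eq_zero, sub_eq_zero, eq_comm (a := (1 : ℝ))]
    simp [hk.ne']
  refine ⟨?_, fun hβ1 T => ?_⟩
  · rw [hSQ, pow_dvd_pow_succ_add_C_mul_iff hd (eval_momentPoly_neg_ne_zero hk d hβ), hcoef]
  · simp [hSQ, hcoef.mpr hβ1]
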